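/- Let N be uniformly distributed on [−ϑ, ϑ] with ϑ ∈ (0,∞), let G(x) = x, and let β ≥ ϑ. Then for every random variable X defined on the same probability space as N with X ≥ 0 almost surely, E X ≤ β, and such that X+N has a law absolutely continuous with respect to Lebesgue measure with well-defined differential entropy, one has h(X+N) ≤ ln(e·(β+ϑ)), and equality is attained by the (fully dependent) input X† = g(N), where g(n) = −n − ϑ − (β+ϑ)·ln((ϑ−n)/(2ϑ)) for n ∈ (−ϑ,ϑ); for this input Y† = X†+N has density p_{Y†}(y) = (β+ϑ)^{-1} e^{−(y+ϑ)/(β+ϑ)} for y ≥ −ϑ (i.e. Y† is a shifted exponential with mean β and shift −ϑ), X† ≥ 0, E X† = β, and h(Y†) = ln(e·(β+ϑ)). In particular sup{h(Y): Y ∈ Σ(N;G,β,[0,∞))} = ln(e·(β+ϑ)). -/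

import Mathlib

open MeasureTheory Real Filter Set
open scoped ENNReal Topology ProbabilityTheory

noncomputable section

variable {Ω : Type*} [MeasureSpace Ω]

/-- `Z` has a law absolutely continuous w.r.t. Lebesgue measure, with density `p`. -/
def HasDens (Z : Ω → ℝ) (p : ℝ → ℝ) : Prop :=
  Measurable Z ∧ Measurable p ∧ (∀ x, 0 ≤ p x) ∧
    Measure.map Z (ℙ : Measure Ω) = volume.withDensity (fun x => ENNReal.ofReal (p x))

/-- Differential entropy of a density: `h = -∫ p ln p`. -/
def dEnt (p : ℝ → ℝ) : ℝ := -∫ y, p y * Real.log (p y)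

/-- The differential entropy of the density `p` is well defined: `∫ p |ln p| < ∞`. -/
def EntWellDef (p : ℝ → ℝ) : Prop := Integrable (fun y => p y * Real.log (p y))

/-- The real points of the open interval `(a,b)` with extended-real endpoints. -/
def eIoo (a b : EReal) : Set ℝ := {x : ℝ | a < (x : EReal) ∧ (x : EReal) < b}

/-- The noise class `𝔑(a,b)`: `N` takes values in the closure of `(a,b)`, is integrable,
has a Lebesgue density `pN` which is `C¹` and strictly positive on `(a,b)` and vanishes
outside, and has well-defined differential entropy. -/
structure IsNoise (a b : EReal) (N : Ω → ℝ) (pN : ℝ → ℝ) : Prop where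
  prob : IsProbabilityMeasure (ℙ : Measure Ω)
  lt : a < b
  mem : ∀ᵐ ω ∂(ℙ : Measure Ω), a ≤ (N ω : EReal) ∧ (N ω : EReal) ≤ b
  int : Integrable N (ℙ : Measure Ω)
  dens : HasDens N pN
  smooth : ContDiffOn ℝ 1 pN (eIoo a b)
  pos : ∀ x ∈ eIoo a b, 0 < pN x
  zero : ∀ x ∉ eIoo a b, pN x = 0
  went : EntWellDef pN

/-- Cost function: `C¹`, convex, with derivative a.e. nonzero. -/
structure IsCost (G : ℝ → ℝ) : Prop where
  smooth : ContDiff ℝ 1 G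
  convex : ConvexOn ℝ Set.univ G
  dne : ∀ᵐ x ∂(volume : Measure ℝ), deriv G x ≠ 0

/-- `β ∈ I_G = (inf G, ∞)`, i.e. `β` is strictly above the infimum of `G`. -/
def InIG (G : ℝ → ℝ) (β : ℝ) : Prop := ∃ x, G x < β

/-- Admissible input: integrable, with integrable cost and average cost at most `β`. -/
def Admissible (G : ℝ → ℝ) (β : ℝ) (X : Ω → ℝ) : Prop :=
  Measurable X ∧ Integrable X (ℙ : Measure Ω) ∧
    Integrable (fun ω => G (X ω)) (ℙ : Measure Ω) ∧
    (∫ ω, G (X ω) ∂(ℙ : Measure Ω)) ≤ β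

/-- The set of achievable output entropies `{h(Y) : Y ∈ Σ(N;G,β)}` (joint couplings). -/
def SigmaEnt (N : Ω → ℝ) (G : ℝ → ℝ) (β : ℝ) : Set ℝ :=
  {h | ∃ (X : Ω → ℝ) (pY : ℝ → ℝ), Admissible G β X ∧
        HasDens (fun ω => X ω + N ω) pY ∧ EntWellDef pY ∧ h = dEnt pY}

/-- The set of achievable output entropies `{h(Y) : Y ∈ Σ_⊥(N;G,β)}` (independent input). -/
def SigmaEntIndep (N : Ω → ℝ) (G : ℝ → ℝ) (β : ℝ) : Set ℝ :=
  {h | ∃ (X : Ω → ℝ) (pY : ℝ → ℝ), Admissible G β X ∧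
        ProbabilityTheory.IndepFun X N (ℙ : Measure Ω) ∧
        HasDens (fun ω => X ω + N ω) pY ∧ EntWellDef pY ∧ h = dEnt pY}

/-- Achievable output entropies with an additional amplitude constraint `X ∈ s` a.s. -/
def SigmaEntAmp (N : Ω → ℝ) (G : ℝ → ℝ) (β : ℝ) (s : Set ℝ) : Set ℝ :=
  {h | ∃ (X : Ω → ℝ) (pY : ℝ → ℝ), Admissible G β X ∧
        (∀ᵐ ω ∂(ℙ : Measure Ω), X ω ∈ s) ∧
        HasDens (fun ω => X ω + N ω) pY ∧ EntWellDef pY ∧ h = dEnt pY}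

/-- The filter of real numbers approaching the extended-real endpoint `a` from the right. -/
def rightNhds (a : EReal) : Filter ℝ :=
  Filter.comap (fun x : ℝ => (x : EReal)) (nhdsWithin a (Set.Ioi a))

/-- The filter of real numbers approaching the extended-real endpoint `b` from the left. -/
def leftNhds (b : EReal) : Filter ℝ :=
  Filter.comap (fun x : ℝ => (x : EReal)) (nhdsWithin b (Set.Iio b))

/-- The hypotheses of Theorem 1: constants `C, λ > 0`, a `C¹` curve `g` with derivative `g'`
and a primitive `Φ` of `G' ∘ g`, satisfying the first integral of the Euler–Lagrange
equation, the natural boundary conditions, the isoperimetric constraint `E G(g(N)) = β`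
and `E|g(N)| < ∞`. -/
structure FirstIntegral (a b : EReal) (N : Ω → ℝ) (pN G : ℝ → ℝ) (β : ℝ)
    (C lam : ℝ) (g g' Φ : ℝ → ℝ) : Prop where
  hC : 0 < C
  hlam : 0 < lam
  hgmeas : Measurable g
  hg : ∀ n ∈ eIoo a b, HasDerivAt g (g' n) n
  hg' : ContinuousOn g' (eIoo a b)
  hΦ : ∀ n ∈ eIoo a b, HasDerivAt Φ (deriv G (g n)) n
  heq : ∀ n ∈ eIoo a b, pN n = C * (1 + g' n) * Real.exp (-(lam * (Φ n + G (g n))))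
  hbl : Filter.Tendsto (fun n => pN n / (1 + g' n))
    (rightNhds a ⊓ Filter.principal (eIoo a b)) (nhds 0)
  hbr : Filter.Tendsto (fun n => pN n / (1 + g' n))
    (leftNhds b ⊓ Filter.principal (eIoo a b)) (nhds 0)
  hGint : Integrable (fun ω => G (g (N ω))) (ℙ : Measure Ω)
  hcost : (∫ ω, G (g (N ω)) ∂(ℙ : Measure Ω)) = β
  hgint : Integrable (fun ω => g (N ω)) (ℙ : Measure Ω)

/-- Fourier transform of a finite Borel measure on `ℝ`: `F[μ](f) = ∫ e^{-2πifξ} dμ(ξ)`. -/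
def charF (μ : Measure ℝ) (f : ℝ) : ℂ :=
  ∫ ξ, Complex.exp (Complex.ofReal (-(2 * Real.pi * f * ξ)) * Complex.I) ∂μ

/-- Positive definiteness of a complex-valued function on `ℝ`: every Hermitian sum
`∑_{l,m} φ(f_l - f_m) z_l z̄_m` is a nonnegative real number. -/
def PosDefFn (φ : ℝ → ℂ) : Prop :=
  ∀ (n : ℕ) (f : Fin n → ℝ) (z : Fin n → ℂ),
    0 ≤ (∑ l, ∑ m, φ (f l - f m) * z l * (starRingEnd ℂ) (z m)).re ∧
    (∑ l, ∑ m, φ (f l - f m) * z l * (starRingEnd ℂ) (z m)).im = 0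

/-!
Since `X ≥ 0` and `N ≥ -ϑ`, the output `Y = X + N` lives on `[-ϑ, ∞)` and has mean at most
`β`. Gibbs' inequality against the exponential density on `[-ϑ, ∞)` with mean `β` bounds
`h(Y)` by that density's entropy `log (e (β + ϑ))`. The bound is attained because this
exponential law is the image of the uniform law of `N` under the quantile transform
`T n = -ϑ - (β + ϑ) log ((ϑ - n) / (2ϑ))`: the input `X† = T N - N` gives `Y† = T N`,
and `X† ≥ 0` as soon as `β + ϑ ≥ 2ϑ`.
-/

namespace HasDens

variable {Z : Ω → ℝ} {p : ℝ → ℝ}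

lemma measure_preimage (h : HasDens Z p) {s : Set ℝ} (hs : MeasurableSet s) :
    (ℙ : Measure Ω) (Z ⁻¹' s) = ∫⁻ y in s, ENNReal.ofReal (p y) := by
  rw [← Measure.map_apply h.1 hs, h.2.2.2, withDensity_apply _ hs]

lemma integral_comp (h : HasDens Z p) {f : ℝ → ℝ} (hf : Measurable f) :
    ∫ ω, f (Z ω) ∂(ℙ : Measure Ω) = ∫ y, f y * p y := by
  obtain ⟨hZ, hp, hp0, hlaw⟩ := h
  rw [← integral_map hZ.aemeasurable hf.aestronglyMeasurable, hlaw,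
    integral_withDensity_eq_integral_toReal_smul₀ hp.ennreal_ofReal.aemeasurable (by simp)]
  simp [ENNReal.toReal_ofReal (hp0 _), mul_comm]

lemma integrable_comp_iff (h : HasDens Z p) {f : ℝ → ℝ} (hf : Measurable f) :
    Integrable (fun ω => f (Z ω)) (ℙ : Measure Ω) ↔ Integrable (fun y => f y * p y) := by
  obtain ⟨hZ, hp, hp0, hlaw⟩ := h
  rw [← Function.comp_def, ← integrable_map_measure hf.aestronglyMeasurable hZ.aemeasurable,
    hlaw, integrable_withDensity_iff hp.ennreal_ofReal (by simp)]
  simp [ENNReal.toReal_ofReal (hp0 _)]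

lemma integral_eq_one [IsProbabilityMeasure (ℙ : Measure Ω)] (h : HasDens Z p) :
    ∫ y, p y = 1 := by
  simpa using (h.integral_comp (f := fun _ => 1) measurable_const).symm

lemma ae_eq_zero_of_ae_mem (h : HasDens Z p) {s : Set ℝ} (hs : MeasurableSet s)
    (hZ : ∀ᵐ ω ∂(ℙ : Measure Ω), Z ω ∈ s) : ∀ᵐ y, y ∉ s → p y = 0 := by
  have hnull : (ℙ : Measure Ω) (Z ⁻¹' sᶜ) = 0 := ae_iff.1 hZ
  rw [h.measure_preimage hs.compl, setLIntegral_eq_zero_iff hs.compl h.2.1.ennreal_ofReal]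
    at hnull
  filter_upwards [hnull] with y hy hys
  exact le_antisymm (ENNReal.ofReal_eq_zero.1 (hy hys)) (h.2.2.1 y)

end HasDens

def expDensity (c m : ℝ) : ℝ → ℝ := (Ici c).indicator fun y => m⁻¹ * exp (-((y - c) / m))

section ExpDensity

variable {c m : ℝ}

lemma measurable_expDensity : Measurable (expDensity c m) :=
  (by fun_prop : Measurable fun y => m⁻¹ * exp (-((y - c) / m))).indicator measurableSet_Ici

lemma expDensity_nonneg (hm : 0 < m) (y : ℝ) : 0 ≤ expDensity c m y :=
  indicator_nonneg (fun _ _ => by positivity) y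

lemma expDensity_of_le (hy : c ≤ y) : expDensity c m y = m⁻¹ * exp (-((y - c) / m)) :=
  indicator_of_mem hy _

lemma expDensity_of_lt (hy : y < c) : expDensity c m y = 0 :=
  indicator_of_notMem (not_le.2 hy) _

lemma hasDerivAt_neg_exp_neg_div (y : ℝ) :
    HasDerivAt (fun y => -exp (-((y - c) / m))) (m⁻¹ * exp (-((y - c) / m))) y := by
  have := ((((hasDerivAt_id' y).sub_const c).div_const m).fun_neg.exp).fun_neg
  exact this.congr_deriv (by ring)

lemma hasDerivAt_neg_add_mul_exp_neg_div (hm : 0 < m) (y : ℝ) :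
    HasDerivAt (fun y => -((y - c + m) * exp (-((y - c) / m))))
      ((y - c) * (m⁻¹ * exp (-((y - c) / m)))) y := by
  have := ((((hasDerivAt_id' y).sub_const c).add_const m).fun_mul
    (((hasDerivAt_id' y).sub_const c).div_const m).fun_neg.exp).fun_neg
  refine this.congr_deriv ?_
  field_simp
  ring

lemma tendsto_sub_div_atTop (hm : 0 < m) :
    Tendsto (fun y => (y - c) / m) atTop atTop :=
  (tendsto_atTop_add_const_right _ (-c) tendsto_id).atTop_div_const hm

lemma tendsto_neg_exp_neg_div_atTop (hm : 0 < m) :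
    Tendsto (fun y => -exp (-((y - c) / m))) atTop (𝓝 0) := by
  simpa using (tendsto_exp_neg_atTop_nhds_zero.comp (tendsto_sub_div_atTop hm)).neg

lemma tendsto_neg_add_mul_exp_neg_div_atTop (hm : 0 < m) :
    Tendsto (fun y => -((y - c + m) * exp (-((y - c) / m)))) atTop (𝓝 0) := by
  have h := ((tendsto_pow_mul_exp_neg_atTop_nhds_zero 1).add
    tendsto_exp_neg_atTop_nhds_zero).comp (tendsto_sub_div_atTop (c := c) hm)
  convert (h.const_mul m).neg using 2 with y
  · simp only [Function.comp_apply]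
    field_simp
  · simp

lemma integrableOn_Ici_exp_neg_div (hm : 0 < m) :
    IntegrableOn (fun y => m⁻¹ * exp (-((y - c) / m))) (Ici c) :=
  (integrableOn_Ici_iff_integrableOn_Ioi).2 <|
    integrableOn_Ioi_deriv_of_nonneg' (fun y _ => hasDerivAt_neg_exp_neg_div y)
      (fun _ _ => by positivity) (tendsto_neg_exp_neg_div_atTop hm)

lemma integral_Ioi_exp_neg_div (hm : 0 < m) (t : ℝ) :
    ∫ y in Ioi t, m⁻¹ * exp (-((y - c) / m)) = exp (-((t - c) / m)) := by
  rw [integral_Ioi_of_hasDerivAt_of_nonneg' (fun y _ => hasDerivAt_neg_exp_neg_div y)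
    (fun _ _ => by positivity) (tendsto_neg_exp_neg_div_atTop hm)]
  ring

lemma integrableOn_Ici_sub_mul_exp_neg_div (hm : 0 < m) :
    IntegrableOn (fun y => (y - c) * (m⁻¹ * exp (-((y - c) / m)))) (Ici c) :=
  (integrableOn_Ici_iff_integrableOn_Ioi).2 <|
    integrableOn_Ioi_deriv_of_nonneg' (fun y _ => hasDerivAt_neg_add_mul_exp_neg_div hm y)
      (fun y hy => mul_nonneg (sub_nonneg.2 (le_of_lt hy)) (by positivity))
      (tendsto_neg_add_mul_exp_neg_div_atTop hm)

lemma integral_Ioi_sub_mul_exp_neg_div (hm : 0 < m) :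
    ∫ y in Ioi c, (y - c) * (m⁻¹ * exp (-((y - c) / m))) = m := by
  rw [integral_Ioi_of_hasDerivAt_of_nonneg' (fun y _ => hasDerivAt_neg_add_mul_exp_neg_div hm y)
    (fun y hy => mul_nonneg (sub_nonneg.2 (le_of_lt hy)) (by positivity))
    (tendsto_neg_add_mul_exp_neg_div_atTop hm)]
  simp

lemma integrable_expDensity (hm : 0 < m) : Integrable (expDensity c m) :=
  (integrable_indicator_iff measurableSet_Ici).2 (integrableOn_Ici_exp_neg_div hm)

lemma integral_expDensity (hm : 0 < m) : ∫ y, expDensity c m y = 1 := by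
  rw [expDensity, integral_indicator measurableSet_Ici, integral_Ici_eq_integral_Ioi,
    integral_Ioi_exp_neg_div hm]
  simp

lemma mul_expDensity_eq :
    (fun y => y * expDensity c m y) = fun y => expDensity c m y * c +
      (Ici c).indicator (fun y => (y - c) * (m⁻¹ * exp (-((y - c) / m)))) y := by
  ext y
  rcases le_or_gt c y with hy | hy
  · rw [expDensity_of_le hy, indicator_of_mem (mem_Ici.2 hy)]
    ring
  · rw [expDensity_of_lt hy, indicator_of_notMem (notMem_Ici.2 hy)]
    ring

lemma integrable_mul_expDensity (hm : 0 < m) : Integrable (fun y => y * expDensity c m y) := by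
  rw [mul_expDensity_eq]
  exact ((integrable_expDensity hm).mul_const c).add
    ((integrable_indicator_iff measurableSet_Ici).2 (integrableOn_Ici_sub_mul_exp_neg_div hm))

lemma integral_mul_expDensity (hm : 0 < m) : ∫ y, y * expDensity c m y = c + m := by
  rw [mul_expDensity_eq, integral_add ((integrable_expDensity hm).mul_const c)
    ((integrable_indicator_iff measurableSet_Ici).2 (integrableOn_Ici_sub_mul_exp_neg_div hm)),
    integral_mul_const, integral_expDensity hm, integral_indicator measurableSet_Ici,
    integral_Ici_eq_integral_Ioi, integral_Ioi_sub_mul_exp_neg_div hm, one_mul]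

lemma log_expDensity (hm : 0 < m) (hy : c ≤ y) :
    log (expDensity c m y) = -(log m + (y - c) / m) := by
  rw [expDensity_of_le hy, log_mul (by positivity) (exp_ne_zero _), log_inv, log_exp]
  ring

lemma expDensity_mul_log_eq (hm : 0 < m) (y : ℝ) :
    expDensity c m y * log (expDensity c m y) =
      -(log m - c / m) * expDensity c m y - m⁻¹ * (y * expDensity c m y) := by
  rcases le_or_gt c y with hy | hy
  · rw [log_expDensity hm hy]
    ring
  · simp [expDensity_of_lt hy]

lemma entWellDef_expDensity (hm : 0 < m) : EntWellDef (expDensity c m) := by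
  simp only [EntWellDef, expDensity_mul_log_eq hm]
  exact ((integrable_expDensity hm).const_mul _).sub ((integrable_mul_expDensity hm).const_mul _)

lemma dEnt_expDensity (hm : 0 < m) : dEnt (expDensity c m) = log (exp 1 * m) := by
  simp only [dEnt, expDensity_mul_log_eq hm]
  rw [integral_sub ((integrable_expDensity hm).const_mul _)
      ((integrable_mul_expDensity hm).const_mul _), integral_const_mul, integral_const_mul,
    integral_expDensity hm, integral_mul_expDensity hm, log_mul (exp_ne_zero 1) hm.ne', log_exp]
  field_simp
  ring

lemma withDensity_expDensity_Iic (hm : 0 < m) (t : ℝ) :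
    volume.withDensity (fun y => ENNReal.ofReal (expDensity c m y)) (Iic t) =
      ENNReal.ofReal (1 - exp (-((t - c) / m))) := by
  rw [withDensity_apply _ measurableSet_Iic, ← ofReal_integral_eq_lintegral_ofReal
    (integrable_expDensity hm).integrableOn (ae_of_all _ (expDensity_nonneg hm))]
  rcases le_or_gt c t with ht | ht
  · have hsplit := intervalIntegral.integral_Iic_add_Ioi (b := t)
      (integrable_expDensity (c := c) hm).integrableOn (integrable_expDensity hm).integrableOn
    rw [integral_expDensity hm, setIntegral_congr_fun measurableSet_Ioi
      (fun y hy => expDensity_of_le (ht.trans (le_of_lt hy))), integral_Ioi_exp_neg_div hm]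
      at hsplit
    rw [← hsplit, add_sub_cancel_right]
  · have hexp : 1 ≤ exp (-((t - c) / m)) :=
      one_le_exp (neg_nonneg.2 (div_nonpos_of_nonpos_of_nonneg (by linarith) hm.le))
    rw [setIntegral_eq_zero_of_forall_eq_zero (t := Iic t)
        fun y hy => expDensity_of_lt (lt_of_le_of_lt hy ht),
      ENNReal.ofReal_zero, ENNReal.ofReal_of_nonpos (by linarith)]

end ExpDensity

lemma mul_log_add_sub_le_mul_log {p q : ℝ} (hp : 0 ≤ p) (hq : 0 < q) :
    p * log q + p - q ≤ p * log p := by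
  rcases hp.eq_or_lt with rfl | hp
  · simpa using hq.le
  have h := mul_le_mul_of_nonneg_left (log_le_sub_one_of_pos (div_pos hq hp)) hp.le
  rw [log_div hq.ne' hp.ne', mul_sub_one, mul_div_cancel₀ _ hp.ne'] at h
  linarith

/-- Gibbs' inequality against `expDensity c m`. -/
lemma dEnt_le_of_mean_le {p : ℝ → ℝ} {c m : ℝ} (hm : 0 < m) (hp0 : ∀ y, 0 ≤ p y)
    (hsupp : ∀ᵐ y, y < c → p y = 0) (hmass : ∫ y, p y = 1)
    (hmean_int : Integrable fun y => y * p y) (hmean : ∫ y, y * p y ≤ c + m)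
    (hent : EntWellDef p) : dEnt p ≤ log (exp 1 * m) := by
  have hpoint : ∀ᵐ y,
      p y - expDensity c m y - p y * (log m + (y - c) / m) ≤ p y * log (p y) := by
    filter_upwards [hsupp] with y hy
    rcases lt_or_ge y c with hyc | hyc
    · simp [hy hyc, expDensity_of_lt hyc]
    · have hq : 0 < expDensity c m y := by rw [expDensity_of_le hyc]; positivity
      have := mul_log_add_sub_le_mul_log (hp0 y) hq
      rw [log_expDensity hm hyc] at this
      linarith
  have hp : Integrable p := Integrable.of_integral_ne_zero (by simp [hmass])
  have hlin : (fun y => p y * (log m + (y - c) / m)) =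
      fun y => (log m - c / m) * p y + m⁻¹ * (y * p y) := by
    ext y
    ring
  have hlin_int : Integrable fun y => p y * (log m + (y - c) / m) := by
    rw [hlin]
    exact (hp.const_mul _).add (hmean_int.const_mul _)
  have hlin_val : ∫ y, p y * (log m + (y - c) / m) = log m + ((∫ y, y * p y) - c) / m := by
    rw [hlin, integral_add (hp.const_mul _) (hmean_int.const_mul _), integral_const_mul,
      integral_const_mul, hmass]
    ring
  have hpq : Integrable fun y => p y - expDensity c m y := hp.sub (integrable_expDensity hm)
  have h := integral_mono_ae (f := fun y => p y - expDensity c m y - p y * (log m + (y - c) / m))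
    (hpq.sub hlin_int) hent hpoint
  rw [integral_sub hpq hlin_int, integral_sub hp (integrable_expDensity hm), hmass,
    integral_expDensity hm, hlin_val] at h
  have hmean' : ((∫ y, y * p y) - c) / m ≤ 1 := (div_le_one hm).2 (by linarith)
  rw [dEnt, log_mul (exp_ne_zero 1) hm.ne', log_exp]
  linarith

lemma HasDens.dEnt_le_of_integral_le [IsProbabilityMeasure (ℙ : Measure Ω)] {Y : Ω → ℝ}
    {p : ℝ → ℝ} {c m : ℝ} (h : HasDens Y p) (hent : EntWellDef p) (hm : 0 < m)
    (hY : ∀ᵐ ω ∂(ℙ : Measure Ω), c ≤ Y ω) (hint : Integrable Y (ℙ : Measure Ω))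
    (hmean : ∫ ω, Y ω ∂(ℙ : Measure Ω) ≤ c + m) : dEnt p ≤ log (exp 1 * m) :=
  dEnt_le_of_mean_le hm h.2.2.1
    ((h.ae_eq_zero_of_ae_mem measurableSet_Ici hY).mono fun _ hy hyc => hy (notMem_Ici.2 hyc))
    h.integral_eq_one ((h.integrable_comp_iff (f := fun y => y) measurable_id).1 hint)
    (by rwa [← h.integral_comp (f := fun y => y) measurable_id]) hent

def uniformDensity (a b : ℝ) : ℝ → ℝ := (Icc a b).indicator fun _ => (b - a)⁻¹

lemma mul_uniformDensity_eq {a b : ℝ} :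
    (fun y => y * uniformDensity a b y) = (Icc a b).indicator fun y => y * (b - a)⁻¹ :=
  funext fun _ => (indicator_mul_right _ (fun y => y) _).symm

namespace HasDens

variable {N : Ω → ℝ} {a b : ℝ}

lemma measure_preimage_uniform (hN : HasDens N (uniformDensity a b)) {s : Set ℝ}
    (hs : MeasurableSet s) :
    (ℙ : Measure Ω) (N ⁻¹' s) = ENNReal.ofReal (b - a)⁻¹ * volume (s ∩ Icc a b) := by
  have hofReal : (fun y => ENNReal.ofReal (uniformDensity a b y)) =
      (Icc a b).indicator fun _ => ENNReal.ofReal (b - a)⁻¹ :=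
    funext fun y => by by_cases hy : y ∈ Icc a b <;> simp [uniformDensity, hy]
  rw [hN.measure_preimage hs, hofReal, setLIntegral_indicator measurableSet_Icc,
    setLIntegral_const, inter_comm]

lemma ae_mem_Ico_uniform (hN : HasDens N (uniformDensity a b)) :
    ∀ᵐ ω ∂(ℙ : Measure Ω), N ω ∈ Ico a b := by
  have hsub : (Ico a b)ᶜ ∩ Icc a b ⊆ {b} := fun y ⟨hy, hy'⟩ =>
    eq_of_le_of_not_lt hy'.2 fun hlt => hy ⟨hy'.1, hlt⟩
  rw [ae_iff]
  exact (hN.measure_preimage_uniform measurableSet_Ico.compl).trans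
    (by rw [measure_mono_null hsub (measure_singleton b), mul_zero])

lemma measure_Iic_uniform (hN : HasDens N (uniformDensity a b)) (hab : a < b) {r : ℝ}
    (hr : r ≤ b) : (ℙ : Measure Ω) (N ⁻¹' Iic r) = ENNReal.ofReal ((r - a) / (b - a)) := by
  have hinter : Iic r ∩ Icc a b = Icc a r :=
    ext fun y => ⟨fun ⟨h, h'⟩ => ⟨h'.1, h⟩, fun h => ⟨h.2, h.1, h.2.trans hr⟩⟩
  rw [hN.measure_preimage_uniform measurableSet_Iic, hinter, Real.volume_Icc,
    ← ENNReal.ofReal_mul (inv_nonneg.2 (sub_pos.2 hab).le), inv_mul_eq_div]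

lemma integrable_uniform (hN : HasDens N (uniformDensity a b)) :
    Integrable N (ℙ : Measure Ω) := by
  refine (hN.integrable_comp_iff (f := fun y => y) measurable_id).2 ?_
  rw [mul_uniformDensity_eq, integrable_indicator_iff measurableSet_Icc]
  exact (continuous_id.mul continuous_const).integrableOn_Icc

lemma integral_uniform (hN : HasDens N (uniformDensity a b)) (hab : a < b) :
    ∫ ω, N ω ∂(ℙ : Measure Ω) = (a + b) / 2 := by
  rw [hN.integral_comp (f := fun y => y) measurable_id, mul_uniformDensity_eq,
    integral_indicator measurableSet_Icc, integral_Icc_eq_integral_Ioc,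
    ← intervalIntegral.integral_of_le hab.le,
    intervalIntegral.integral_mul_const, integral_id]
  field_simp [(sub_pos.2 hab).ne']
  ring

end HasDens

/-- `F⁻¹ ∘ G`, where `F` and `G` are the distribution functions of `expDensity a m` and
`uniformDensity a b`. -/
def expQuantile (a b m : ℝ) (n : ℝ) : ℝ := a - m * log ((b - n) / (b - a))

section ExpQuantile

variable {a b m n : ℝ}

lemma measurable_expQuantile : Measurable (expQuantile a b m) := by
  unfold expQuantile
  fun_prop

lemma expQuantile_le_iff (hm : 0 < m) (hn : n ∈ Ico a b) {t : ℝ} :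
    expQuantile a b m n ≤ t ↔ n ≤ b - (b - a) * exp (-((t - a) / m)) := by
  have hba : 0 < b - a := by linarith [hn.1, hn.2]
  have hu : 0 < (b - n) / (b - a) := div_pos (by linarith [hn.2]) hba
  calc expQuantile a b m n ≤ t ↔ -((t - a) / m) ≤ log ((b - n) / (b - a)) := by
        rw [expQuantile, neg_le, le_div_iff₀ hm]
        constructor <;> intro h <;> linarith
    _ ↔ exp (-((t - a) / m)) ≤ (b - n) / (b - a) := le_log_iff_exp_le hu
    _ ↔ n ≤ b - (b - a) * exp (-((t - a) / m)) := by
        rw [le_div_iff₀ hba]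
        constructor <;> intro h <;> linarith

lemma le_expQuantile (hm : b - a ≤ m) (hn : n ∈ Ico a b) : n ≤ expQuantile a b m n := by
  have hba : 0 < b - a := by linarith [hn.1, hn.2]
  set u := (b - n) / (b - a)
  have hu : 0 < u := div_pos (by linarith [hn.2]) hba
  have hu1 : u ≤ 1 := (div_le_one hba).2 (by linarith [hn.1])
  have hbu : (b - a) * u = b - n := mul_div_cancel₀ _ hba.ne'
  have hlog : m * log u ≤ m * (u - 1) :=
    mul_le_mul_of_nonneg_left (log_le_sub_one_of_pos hu) (by linarith)
  have hm' : (b - a) * (1 - u) ≤ m * (1 - u) := mul_le_mul_of_nonneg_right hm (by linarith)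
  rw [expQuantile]
  linarith

lemma hasDens_expQuantile [IsProbabilityMeasure (ℙ : Measure Ω)] {N : Ω → ℝ}
    (hN : HasDens N (uniformDensity a b)) (hab : a < b) (hm : 0 < m) :
    HasDens (fun ω => expQuantile a b m (N ω)) (expDensity a m) := by
  have hmeas : Measurable fun ω => expQuantile a b m (N ω) := measurable_expQuantile.comp hN.1
  refine ⟨hmeas, measurable_expDensity, expDensity_nonneg hm, ?_⟩
  have := Measure.isProbabilityMeasure_map (μ := (ℙ : Measure Ω)) hmeas.aemeasurable
  refine Measure.ext_of_Iic _ _ fun t => ?_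
  have hpre : (fun ω => expQuantile a b m (N ω)) ⁻¹' Iic t =ᵐ[(ℙ : Measure Ω)]
      N ⁻¹' Iic (b - (b - a) * exp (-((t - a) / m))) := by
    filter_upwards [hN.ae_mem_Ico_uniform] with ω hω
    exact propext (expQuantile_le_iff hm hω)
  rw [Measure.map_apply hmeas measurableSet_Iic, measure_congr hpre,
    hN.measure_Iic_uniform hab (by nlinarith [exp_pos (-((t - a) / m))]),
    withDensity_expDensity_Iic hm]
  congr 1
  field_simp [(sub_pos.2 hab).ne']
  ring

lemma integrable_expQuantile_comp [IsProbabilityMeasure (ℙ : Measure Ω)] {N : Ω → ℝ}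
    (hN : HasDens N (uniformDensity a b)) (hab : a < b) (hm : 0 < m) :
    Integrable (fun ω => expQuantile a b m (N ω)) (ℙ : Measure Ω) :=
  ((hasDens_expQuantile hN hab hm).integrable_comp_iff (f := fun y => y) measurable_id).2
    (integrable_mul_expDensity hm)

lemma integral_expQuantile_comp_sub [IsProbabilityMeasure (ℙ : Measure Ω)] {N : Ω → ℝ}
    (hN : HasDens N (uniformDensity a b)) (hab : a < b) (hm : 0 < m) :
    ∫ ω, (expQuantile a b m (N ω) - N ω) ∂(ℙ : Measure Ω) = a + m - (a + b) / 2 := by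
  rw [integral_sub (integrable_expQuantile_comp hN hab hm) hN.integrable_uniform,
    (hasDens_expQuantile hN hab hm).integral_comp (f := fun y => y) measurable_id,
    integral_mul_expDensity hm, hN.integral_uniform hab]

end ExpQuantile

lemma dEnt_add_uniform_le [IsProbabilityMeasure (ℙ : Measure Ω)] {X N : Ω → ℝ} {pY : ℝ → ℝ}
    {a b β m : ℝ} (hN : HasDens N (uniformDensity a b)) (hab : a < b) (hm : 0 < m)
    (hβm : β + (a + b) / 2 ≤ a + m) (hXint : Integrable X (ℙ : Measure Ω))
    (hX0 : ∀ᵐ ω ∂(ℙ : Measure Ω), 0 ≤ X ω) (hXβ : ∫ ω, X ω ∂(ℙ : Measure Ω) ≤ β)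
    (hY : HasDens (fun ω => X ω + N ω) pY) (hent : EntWellDef pY) :
    dEnt pY ≤ log (exp 1 * m) := by
  refine hY.dEnt_le_of_integral_le (c := a) hent hm ?_ (hXint.add hN.integrable_uniform) ?_
  · filter_upwards [hX0, hN.ae_mem_Ico_uniform] with ω hXω hNω
    linarith [hNω.1]
  · rw [integral_add hXint hN.integrable_uniform, hN.integral_uniform hab]
    linarith

lemma uniformDensity_neg_self (ϑ : ℝ) :
    uniformDensity (-ϑ) ϑ = fun n => if n ∈ Icc (-ϑ) ϑ then (2 * ϑ)⁻¹ else 0 := by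
  funext n
  by_cases hn : n ∈ Icc (-ϑ) ϑ <;> simp [uniformDensity, hn, two_mul]

lemma expDensity_neg (ϑ m : ℝ) :
    expDensity (-ϑ) m = fun y => if -ϑ ≤ y then m⁻¹ * exp (-((y + ϑ) / m)) else 0 := by
  funext y
  by_cases hy : -ϑ ≤ y <;> simp [expDensity, hy]

lemma expQuantile_neg_self_sub (ϑ m n : ℝ) :
    expQuantile (-ϑ) ϑ m n - n = -n - ϑ - m * log ((ϑ - n) / (2 * ϑ)) := by
  rw [expQuantile, sub_neg_eq_add, ← two_mul]
  ring

/-- uniform noise on `[−ϑ,ϑ]`, linear cost, amplitude constraint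
`X ≥ 0`, case `β ≥ ϑ`: every nonnegative input with `E X ≤ β` satisfies
`h(X+N) ≤ ln(e(β+ϑ))`, with equality for the dependent input `X† = g(N)` with
`g(n) = −n − ϑ − (β+ϑ)·ln((ϑ−n)/(2ϑ))`; for this input `X† ≥ 0` a.s., `E X† = β`, and
`Y† = X†+N` has the shifted exponential density
`p_{Y†}(y) = (β+ϑ)⁻¹ e^{−(y+ϑ)/(β+ϑ)}` for `y ≥ −ϑ`, with `h(Y†) = ln(e(β+ϑ))`;
in particular `sup{h(Y) : Y ∈ Σ(N;x,β,[0,∞))} = ln(e(β+ϑ))`. -/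
theorem uniform_noise_linear_cost
    {Ω : Type*} [MeasureSpace Ω] [IsProbabilityMeasure (ℙ : Measure Ω)]
    (N : Ω → ℝ) (ϑ : ℝ) (hϑ : 0 < ϑ)
    (hN : HasDens N (fun n => if n ∈ Set.Icc (-ϑ) ϑ then (2 * ϑ)⁻¹ else 0))
    (β : ℝ) (hβ : ϑ ≤ β) :
    (∀ (X : Ω → ℝ) (pY : ℝ → ℝ), Measurable X → Integrable X (ℙ : Measure Ω) →
      (∀ᵐ ω ∂(ℙ : Measure Ω), 0 ≤ X ω) → (∫ ω, X ω ∂(ℙ : Measure Ω)) ≤ β →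
      HasDens (fun ω => X ω + N ω) pY → EntWellDef pY →
      dEnt pY ≤ Real.log (Real.exp 1 * (β + ϑ))) ∧
    (∀ᵐ ω ∂(ℙ : Measure Ω),
      0 ≤ -N ω - ϑ - (β + ϑ) * Real.log ((ϑ - N ω) / (2 * ϑ))) ∧
    (∫ ω, (-N ω - ϑ - (β + ϑ) * Real.log ((ϑ - N ω) / (2 * ϑ))) ∂(ℙ : Measure Ω)) = β ∧
    HasDens (fun ω =>
        (-N ω - ϑ - (β + ϑ) * Real.log ((ϑ - N ω) / (2 * ϑ))) + N ω)
      (fun y => if -ϑ ≤ y then (β + ϑ)⁻¹ * Real.exp (-((y + ϑ) / (β + ϑ))) else 0) ∧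
    dEnt (fun y => if -ϑ ≤ y then (β + ϑ)⁻¹ * Real.exp (-((y + ϑ) / (β + ϑ))) else 0) =
      Real.log (Real.exp 1 * (β + ϑ)) ∧
    sSup (SigmaEntAmp N (fun x => x) β (Set.Ici 0)) = Real.log (Real.exp 1 * (β + ϑ)) := by
  have hm : 0 < β + ϑ := by linarith
  have hU : HasDens N (uniformDensity (-ϑ) ϑ) := uniformDensity_neg_self ϑ ▸ hN
  simp only [← expQuantile_neg_self_sub, sub_add_cancel, ← expDensity_neg]
  set X := fun ω => expQuantile (-ϑ) ϑ (β + ϑ) (N ω) - N ω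
  have hY := hasDens_expQuantile hU (by linarith) hm
  have hXint : Integrable X := (integrable_expQuantile_comp hU (by linarith) hm).sub
    hU.integrable_uniform
  have hXmean : ∫ ω, X ω = β := by
    rw [integral_expQuantile_comp_sub hU (by linarith) hm]
    ring
  have hX0 : ∀ᵐ ω, 0 ≤ X ω :=
    hU.ae_mem_Ico_uniform.mono fun ω hω => sub_nonneg.2 (le_expQuantile (by linarith) hω)
  refine ⟨fun X pY _ hXint hX0 hXβ hXY hent =>
      dEnt_add_uniform_le hU (by linarith) hm (by linarith) hXint hX0 hXβ hXY hent,
    hX0, hXmean, hY, dEnt_expDensity hm, IsGreatest.csSup_eq ⟨?_, ?_⟩⟩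
  · exact ⟨X, _, ⟨(measurable_expQuantile.comp hU.1).sub hU.1, hXint, hXint, hXmean.le⟩, hX0,
      by simpa only [X, sub_add_cancel] using hY, entWellDef_expDensity hm,
      (dEnt_expDensity hm).symm⟩
  · rintro _ ⟨X, pY, ⟨-, hXint, -, hXβ⟩, hX0, hXY, hent, rfl⟩
    exact dEnt_add_uniform_le hU (by linarith) hm (by linarith) hXint hX0 hXβ hXY hent
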